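/- arXiv:1809.09385 — 3 statements merged into one kernel-verified Lean document; each statement's English description precedes it below -/
import Mathlib

section
/- For every complex λ with Im λ > 0, (1/π) ∫_ℝ (1+ix)^{(iλ−1)/2 − n} (1−ix)^{(iλ−1)/2 + n} dx = ((iλ−1)/2 + n)/((iλ−1)/2 − n + 1) · (1/π) ∫_ℝ (1+ix)^{(iλ−1)/2 − n + 1} (1−ix)^{(iλ−1)/2 + n − 1} dx, for every half-integer n ≥ 1 (assuming both integrals converge absolutely). -/
/-!
Integrate by parts with `u = (1 + ix)^a` and `v = (1 - ix)^b`: since `u' = i a (1 + ix)^(a-1)` and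
`v' = -i b (1 - ix)^(b-1)`, this gives `a ∫ (1 + ix)^(a-1) (1 - ix)^b = b ∫ (1 + ix)^a (1 - ix)^(b-1)`.
The boundary term `u v` has modulus `O((1 + x²)^((Re a + Re b)/2))`, which tends to `0` as `|x| → ∞`
because `Re a + Re b = -Im λ < 0` for `a = (iλ+1)/2 - n`, `b = (iλ-1)/2 + n`;
for the same `a`, `Re a = (1 - Im λ)/2 - n < 0`, so one may divide by `a`.
-/

open MeasureTheory Complex Filter Topology

noncomputable def cFunctionIntegrand (a b : ℂ) (x : ℝ) : ℂ :=
  (1 + I * x) ^ a * (1 - I * x) ^ b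

lemma norm_cpow_le_rpow_mul_exp_pi (z w : ℂ) :
    ‖z ^ w‖ ≤ ‖z‖ ^ w.re * Real.exp (Real.pi * |w.im|) := by
  refine (norm_cpow_le z w).trans ?_
  rw [div_eq_mul_inv, ← Real.exp_neg]
  gcongr
  calc -(z.arg * w.im) ≤ |z.arg * w.im| := neg_le_abs _
    _ = |z.arg| * |w.im| := abs_mul _ _
    _ ≤ Real.pi * |w.im| := by gcongr; exact abs_arg_le_pi z

lemma norm_one_add_I_mul_ofReal (x : ℝ) : ‖1 + I * x‖ = √(1 + x ^ 2) := by
  simpa [mul_comm I] using norm_add_mul_I 1 x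

lemma norm_one_sub_I_mul_ofReal (x : ℝ) : ‖1 - I * x‖ = √(1 + x ^ 2) := by
  simpa [mul_comm I, sub_eq_add_neg] using norm_add_mul_I 1 (-x)

lemma norm_cFunctionIntegrand_le (a b : ℂ) (x : ℝ) :
    ‖cFunctionIntegrand a b x‖ ≤
      √(1 + x ^ 2) ^ (a.re + b.re) * (Real.exp (Real.pi * |a.im|) * Real.exp (Real.pi * |b.im|)) := by
  have hpos : 0 < √(1 + x ^ 2) := Real.sqrt_pos.mpr (by positivity)
  calc ‖cFunctionIntegrand a b x‖
      = ‖(1 + I * x) ^ a‖ * ‖(1 - I * x) ^ b‖ := norm_mul _ _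
    _ ≤ (‖1 + I * x‖ ^ a.re * Real.exp (Real.pi * |a.im|)) *
        (‖1 - I * x‖ ^ b.re * Real.exp (Real.pi * |b.im|)) :=
      mul_le_mul (norm_cpow_le_rpow_mul_exp_pi _ _) (norm_cpow_le_rpow_mul_exp_pi _ _)
        (norm_nonneg _) (by positivity)
    _ = _ := by
      rw [norm_one_add_I_mul_ofReal, norm_one_sub_I_mul_ofReal, Real.rpow_add hpos]; ring

lemma tendsto_cFunctionIntegrand_cocompact {a b : ℂ} (hab : a.re + b.re < 0) :
    Tendsto (cFunctionIntegrand a b) (cocompact ℝ) (𝓝 0) := by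
  have hsqrt : Tendsto (fun x : ℝ => √(1 + x ^ 2)) (cocompact ℝ) atTop := by
    refine tendsto_atTop_mono (fun x => ?_) tendsto_norm_cocompact_atTop
    rw [Real.norm_eq_abs, ← Real.sqrt_sq_eq_abs]
    exact Real.sqrt_le_sqrt (by linarith)
  refine squeeze_zero_norm (norm_cFunctionIntegrand_le a b) ?_
  simpa using ((tendsto_rpow_neg_atTop (neg_pos.mpr hab)).comp hsqrt).mul_const
    (Real.exp (Real.pi * |a.im|) * Real.exp (Real.pi * |b.im|))

lemma hasDerivAt_one_add_I_mul_cpow (w : ℂ) (x : ℝ) :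
    HasDerivAt (fun y : ℝ => (1 + I * y) ^ w) (w * (1 + I * x) ^ (w - 1) * I) x := by
  have hlin : HasDerivAt (fun z : ℂ => 1 + I * z) I x := by
    simpa using ((hasDerivAt_id (x : ℂ)).const_mul I).const_add 1
  have hslit : 1 + I * x ∈ slitPlane := mem_slitPlane_iff.mpr (Or.inl (by simp))
  simpa using (hlin.cpow_const hslit).comp_ofReal

lemma hasDerivAt_one_sub_I_mul_cpow (w : ℂ) (x : ℝ) :
    HasDerivAt (fun y : ℝ => (1 - I * y) ^ w) (w * (1 - I * x) ^ (w - 1) * -I) x := by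
  have hlin : HasDerivAt (fun z : ℂ => 1 - I * z) (-I) x := by
    simpa using ((hasDerivAt_id (x : ℂ)).const_mul I).const_sub 1
  have hslit : 1 - I * x ∈ slitPlane := mem_slitPlane_iff.mpr (Or.inl (by simp))
  simpa using (hlin.cpow_const hslit).comp_ofReal

theorem mul_integral_cFunctionIntegrand_sub_one_left {a b : ℂ} (hab : a.re + b.re < 0)
    (h₁ : Integrable (cFunctionIntegrand (a - 1) b))
    (h₂ : Integrable (cFunctionIntegrand a (b - 1))) :
    a * ∫ x, cFunctionIntegrand (a - 1) b x = b * ∫ x, cFunctionIntegrand a (b - 1) x := by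
  set u : ℝ → ℂ := fun x => (1 + I * x) ^ a
  set v : ℝ → ℂ := fun x => (1 - I * x) ^ b
  set u' : ℝ → ℂ := fun x => a * (1 + I * x) ^ (a - 1) * I
  set v' : ℝ → ℂ := fun x => b * (1 - I * x) ^ (b - 1) * -I
  have huv' : u * v' = fun x => (-I * b) * cFunctionIntegrand a (b - 1) x := by
    ext x; simp only [Pi.mul_apply, u, v', cFunctionIntegrand]; ring
  have hu'v : u' * v = fun x => (I * a) * cFunctionIntegrand (a - 1) b x := by
    ext x; simp only [Pi.mul_apply, u', v, cFunctionIntegrand]; ring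
  have huv : Tendsto (u * v) (cocompact ℝ) (𝓝 0) := tendsto_cFunctionIntegrand_cocompact hab
  have hparts := integral_mul_deriv_eq_deriv_mul
    (fun x _ => hasDerivAt_one_add_I_mul_cpow a x) (fun x _ => hasDerivAt_one_sub_I_mul_cpow b x)
    (huv' ▸ h₂.const_mul _) (hu'v ▸ h₁.const_mul _)
    (huv.mono_left atBot_le_cocompact) (huv.mono_left atTop_le_cocompact)
  change ∫ x, (u * v') x = 0 - 0 - ∫ x, (u' * v) x at hparts
  simp only [huv', hu'v, integral_const_mul] at hparts
  linear_combination -I * hparts + ((a * ∫ x, cFunctionIntegrand (a - 1) b x)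
    - b * ∫ x, cFunctionIntegrand a (b - 1) x) * I_mul_I

theorem stmt9_general (l : ℂ) (hl : 0 < l.im) (n : ℝ) (hn1 : 1 ≤ n)
    (h1 : MeasureTheory.Integrable (fun x : ℝ =>
      (1 + Complex.I * (x:ℂ)) ^ ((Complex.I * l - 1)/2 - (n:ℂ)) *
      (1 - Complex.I * (x:ℂ)) ^ ((Complex.I * l - 1)/2 + (n:ℂ))))
    (h2 : MeasureTheory.Integrable (fun x : ℝ =>
      (1 + Complex.I * (x:ℂ)) ^ ((Complex.I * l - 1)/2 - (n:ℂ) + 1) *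
      (1 - Complex.I * (x:ℂ)) ^ ((Complex.I * l - 1)/2 + (n:ℂ) - 1))) :
    (1/(Real.pi : ℂ)) * ∫ x : ℝ,
        (1 + Complex.I * (x:ℂ)) ^ ((Complex.I * l - 1)/2 - (n:ℂ)) *
        (1 - Complex.I * (x:ℂ)) ^ ((Complex.I * l - 1)/2 + (n:ℂ))
      = (((Complex.I * l - 1)/2 + (n:ℂ)) / ((Complex.I * l - 1)/2 - (n:ℂ) + 1)) *
        ((1/(Real.pi : ℂ)) * ∫ x : ℝ,
          (1 + Complex.I * (x:ℂ)) ^ ((Complex.I * l - 1)/2 - (n:ℂ) + 1) *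
          (1 - Complex.I * (x:ℂ)) ^ ((Complex.I * l - 1)/2 + (n:ℂ) - 1)) := by
  set a : ℂ := (I * l - 1) / 2 - n
  set b : ℂ := (I * l - 1) / 2 + n
  have hdecay : (a + 1).re + b.re < 0 := by simp [a, b]; linarith
  have hne : a + 1 ≠ 0 := fun h => by
    have := congrArg re h
    simp [a] at this
    linarith
  have key := mul_integral_cFunctionIntegrand_sub_one_left hdecay
    (by rw [add_sub_cancel_right]; exact h1) h2
  simp only [add_sub_cancel_right, cFunctionIntegrand] at key
  field_simp
  linear_combination key

theorem stmt9 (l : ℂ) (hl : 0 < l.im) (n : ℝ) (hn : ∃ m : ℤ, n = (m:ℝ)/2) (hn1 : 1 ≤ n)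
    (h1 : MeasureTheory.Integrable (fun x : ℝ =>
      (1 + Complex.I * (x:ℂ)) ^ ((Complex.I * l - 1)/2 - (n:ℂ)) *
      (1 - Complex.I * (x:ℂ)) ^ ((Complex.I * l - 1)/2 + (n:ℂ))))
    (h2 : MeasureTheory.Integrable (fun x : ℝ =>
      (1 + Complex.I * (x:ℂ)) ^ ((Complex.I * l - 1)/2 - (n:ℂ) + 1) *
      (1 - Complex.I * (x:ℂ)) ^ ((Complex.I * l - 1)/2 + (n:ℂ) - 1))) :
    (1/(Real.pi : ℂ)) * ∫ x : ℝ,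
        (1 + Complex.I * (x:ℂ)) ^ ((Complex.I * l - 1)/2 - (n:ℂ)) *
        (1 - Complex.I * (x:ℂ)) ^ ((Complex.I * l - 1)/2 + (n:ℂ))
      = (((Complex.I * l - 1)/2 + (n:ℂ)) / ((Complex.I * l - 1)/2 - (n:ℂ) + 1)) *
        ((1/(Real.pi : ℂ)) * ∫ x : ℝ,
          (1 + Complex.I * (x:ℂ)) ^ ((Complex.I * l - 1)/2 - (n:ℂ) + 1) *
          (1 - Complex.I * (x:ℂ)) ^ ((Complex.I * l - 1)/2 + (n:ℂ) - 1)) :=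
  stmt9_general l hl n hn1 h1 h2
end

section
/- Let 0 < ε < 1/2 and let n ∈ (1/2)ℕ with n ≥ 3. Define Q_n(λ) = π^{−1/2} ∏ (iλ − j)/(iλ + j), where the product is over j = 1/2, 3/2, …, n − 1/2 if n is an integer (and j = 1, 2, …, n − 1/2 if n is a half-odd-integer). Then for α = 0,1,2,3 and all λ with |Im λ| < 1/2 − ε, |d^α/dλ^α Q_n(λ)| ≤ C_{ε,α} (1+n)^6 (1+|λ|)^{−α}. -/
/-!
Write `q_{a,b}(λ) = (iλ - a)/(iλ + b)`, so that `Q_n = π^{-1/2} ∏ q_{j,j}`. Pairing each numerator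
with the next denominator, `Q_n` is `π^{-1/2}` times one extreme factor `q_{n-1/2, j₀}` times the
factors `q_{j,j+1}`, and the latter have modulus at most `1` on `|Im λ| ≤ 1/2`.
Since `q_{a,b} = 1 - (a + b)/(iλ + b)`, its `k`-th derivative has modulus
`(a + b) k!/|iλ + b|^{k+1}`, and `|iλ + b| ≥ ε (1 + |λ|)/2` on the strip. Hence every factor has `k`-th derivative
`O((n/(ε(1 + |λ|)))^k)`, the extreme factor with an extra prefactor `O(n/ε)`, and the Leibniz rule
for the product of `n` factors gives `|Q_n^{(α)}(λ)| = O_ε(n^{1+α} (1 + |λ|)^{-α})`.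
-/

open Complex Finset Filter Topology Nat

section IteratedDerivBounds

variable {𝕜 : Type*} [NontriviallyNormedField 𝕜] {U : Set 𝕜} {x : 𝕜} {n : ℕ}

theorem norm_iteratedDeriv_prod_le_of_forall_le_pow {ι : Type*} {u : Finset ι} {f : ι → 𝕜 → 𝕜}
    (hU : IsOpen U) (hf : ∀ i ∈ u, ContDiffOn 𝕜 n (f i) U) (hx : x ∈ U) {r : ℝ}
    (hr : ∀ i ∈ u, ∀ k ≤ n, ‖iteratedDeriv k (f i) x‖ ≤ r ^ k) :
    ‖iteratedDeriv n (fun y => ∏ i ∈ u, f i y) x‖ ≤ (#u * r) ^ n := by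
  classical
  have hderiv : ∀ (g : 𝕜 → 𝕜) (k : ℕ),
      ‖iteratedFDerivWithin 𝕜 k g U x‖ = ‖iteratedDeriv k g x‖ := fun g k => by
    rw [norm_iteratedFDerivWithin_eq_norm_iteratedDerivWithin, iteratedDerivWithin_of_isOpen hU hx]
  have hterm : ∀ p ∈ u.sym n,
      ∏ j ∈ u, ‖iteratedFDerivWithin 𝕜 ((p : Multiset ι).count j) (f j) U x‖ ≤ r ^ n := by
    intro p hp
    have hpu : ∀ a ∈ (p : Multiset ι), a ∈ u := fun a ha => mem_sym_iff.mp hp a ha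
    calc ∏ j ∈ u, ‖iteratedFDerivWithin 𝕜 ((p : Multiset ι).count j) (f j) U x‖
        ≤ ∏ j ∈ u, r ^ (p : Multiset ι).count j :=
          prod_le_prod (fun _ _ => norm_nonneg _) fun j hj => by
            rw [hderiv]
            exact hr j hj _ ((Multiset.count_le_card _ _).trans (Sym.card_coe (s := p)).le)
      _ = r ^ n := by rw [prod_pow_eq_pow_sum, Multiset.sum_count_eq_card hpu, Sym.card_coe]
  calc ‖iteratedDeriv n (fun y => ∏ i ∈ u, f i y) x‖
      = ‖iteratedFDerivWithin 𝕜 n (fun y => ∏ i ∈ u, f i y) U x‖ := (hderiv _ n).symm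
    _ ≤ ∑ p ∈ u.sym n, ((p : Multiset ι).countPerms : ℝ) *
          ∏ j ∈ u, ‖iteratedFDerivWithin 𝕜 ((p : Multiset ι).count j) (f j) U x‖ :=
        norm_iteratedFDerivWithin_prod_le hf hU.uniqueDiffOn hx le_rfl
    _ ≤ ∑ p ∈ u.sym n, ((p : Multiset ι).countPerms : ℝ) * r ^ n :=
        sum_le_sum fun p hp => mul_le_mul_of_nonneg_left (hterm p hp) (Nat.cast_nonneg _)
    _ = (#u * r) ^ n := by
        rw [← sum_mul, mul_pow, card_eq_sum_ones, Nat.cast_sum, Nat.cast_one, sum_pow]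
        simp

theorem norm_iteratedDeriv_mul_le_of_forall_le_pow {f g : 𝕜 → 𝕜} (hU : IsOpen U)
    (hf : ContDiffOn 𝕜 n f U) (hg : ContDiffOn 𝕜 n g U) (hx : x ∈ U) {M r s : ℝ}
    (hfr : ∀ k ≤ n, ‖iteratedDeriv k f x‖ ≤ M * r ^ k)
    (hgs : ∀ k ≤ n, ‖iteratedDeriv k g x‖ ≤ s ^ k) :
    ‖iteratedDeriv n (fun y => f y * g y) x‖ ≤ M * (r + s) ^ n := by
  have hderiv : ∀ (h : 𝕜 → 𝕜) (k : ℕ),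
      ‖iteratedFDerivWithin 𝕜 k h U x‖ = ‖iteratedDeriv k h x‖ := fun h k => by
    rw [norm_iteratedFDerivWithin_eq_norm_iteratedDerivWithin, iteratedDerivWithin_of_isOpen hU hx]
  calc ‖iteratedDeriv n (fun y => f y * g y) x‖
      = ‖iteratedFDerivWithin 𝕜 n (fun y => f y * g y) U x‖ := (hderiv _ n).symm
    _ ≤ ∑ i ∈ range (n + 1), (n.choose i : ℝ) * ‖iteratedFDerivWithin 𝕜 i f U x‖ *
          ‖iteratedFDerivWithin 𝕜 (n - i) g U x‖ :=
        norm_iteratedFDerivWithin_mul_le hf hg hU.uniqueDiffOn hx le_rfl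
    _ ≤ ∑ i ∈ range (n + 1), (n.choose i : ℝ) * (M * r ^ i) * s ^ (n - i) := by
        refine sum_le_sum fun i hi => ?_
        have hin : i ≤ n := Nat.lt_succ_iff.mp (mem_range.mp hi)
        rw [hderiv, hderiv]
        have hM : 0 ≤ M * r ^ i := (norm_nonneg _).trans (hfr i hin)
        gcongr
        · exact hfr i hin
        · exact hgs _ (Nat.sub_le n i)
    _ = M * (r + s) ^ n := by
        rw [add_pow, mul_sum]
        exact sum_congr rfl fun i _ => by ring

end IteratedDerivBounds

noncomputable def qFactor (a b : ℝ) (z : ℂ) : ℂ := (I * z - a) / (I * z + b)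

lemma iteratedDeriv_qFactor {a b : ℝ} {z : ℂ} (hz : I * z + b ≠ 0) {k : ℕ} (hk : 0 < k) :
    iteratedDeriv k (qFactor a b) z =
      -(a + b) * ((-1) ^ k * k ! * I ^ k * (I * z + b) ^ (-1 - k : ℤ)) := by
  have hloc : qFactor a b =ᶠ[𝓝 z] fun w => 1 + -(a + b : ℂ) * (I * w + b)⁻¹ := by
    filter_upwards [(by fun_prop : ContinuousAt (fun w : ℂ => I * w + b) z).eventually_ne hz]
      with w hw
    rw [qFactor]
    field_simp
    ring
  rw [hloc.iteratedDeriv_eq, iteratedDeriv_const_add hk, iteratedDeriv_const_mul_field,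
    iteratedDeriv_eq_iterate, iter_deriv_inv_linear]

lemma norm_iteratedDeriv_qFactor {a b : ℝ} {z : ℂ} (hz : I * z + b ≠ 0) {k : ℕ} (hk : 0 < k) :
    ‖iteratedDeriv k (qFactor a b) z‖ = |a + b| * k ! / ‖I * z + b‖ ^ (k + 1) := by
  rw [iteratedDeriv_qFactor hz hk]
  have hexp : (-1 - k : ℤ) = -((k + 1 : ℕ) : ℤ) := by push_cast; ring
  rw [hexp, zpow_neg, zpow_natCast, ← ofReal_add, norm_mul, norm_neg, norm_real, Real.norm_eq_abs]
  simp [div_eq_mul_inv, mul_assoc]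

lemma sub_im_le_norm_I_mul_add (b : ℝ) (z : ℂ) : b - z.im ≤ ‖I * z + b‖ := by
  have := re_le_norm (I * z + b)
  simp only [add_re, mul_re, I_re, zero_mul, I_im, one_mul, zero_sub, ofReal_re,
    neg_add_le_iff_le_add] at this
  linarith

lemma abs_re_le_norm_I_mul_add (b : ℝ) (z : ℂ) : |z.re| ≤ ‖I * z + b‖ := by
  simpa using abs_im_le_norm (I * z + b)

lemma I_mul_add_ne_zero {b : ℝ} {z : ℂ} (h : z.im < b) : I * z + b ≠ 0 :=
  norm_pos_iff.mp ((sub_pos.mpr h).trans_le (sub_im_le_norm_I_mul_add b z))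

lemma contDiffOn_qFactor (a : ℝ) {b : ℝ} (hb : 1 / 2 ≤ b) {n : WithTop ℕ∞} :
    ContDiffOn ℂ n (qFactor a b) {z | z.im < 1 / 2} :=
  ((contDiff_const.mul contDiff_id).sub contDiff_const).contDiffOn.div
    ((contDiff_const.mul contDiff_id).add contDiff_const).contDiffOn
    fun _ hz => I_mul_add_ne_zero (lt_of_lt_of_le hz hb)

lemma mul_one_add_norm_le_two_mul_norm_I_mul_add {b δ : ℝ} {z : ℂ} (hz : |z.im| ≤ 1 / 2)
    (hδ : 0 ≤ δ) (hδ' : δ ≤ 1 / 2) (hδb : δ ≤ b - z.im) : δ * (1 + ‖z‖) ≤ 2 * ‖I * z + b‖ := by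
  have hre := sub_im_le_norm_I_mul_add b z
  have him := abs_re_le_norm_I_mul_add b z
  have hz' := norm_le_abs_re_add_abs_im z
  nlinarith

lemma norm_iteratedDeriv_qFactor_le {a b : ℝ} {z : ℂ} (hz : I * z + b ≠ 0) {k n : ℕ}
    (hk : 0 < k) (hkn : k ≤ n) :
    ‖iteratedDeriv k (qFactor a b) z‖ ≤ |a + b| / ‖I * z + b‖ * (n / ‖I * z + b‖) ^ k := by
  have hfact : (k ! : ℝ) ≤ n ^ k := by
    exact_mod_cast k.factorial_le_pow.trans (Nat.pow_le_pow_left hkn k)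
  rw [norm_iteratedDeriv_qFactor hz hk, div_pow, pow_succ]
  calc |a + b| * k ! / (‖I * z + b‖ ^ k * ‖I * z + b‖)
      = |a + b| / ‖I * z + b‖ * (k ! / ‖I * z + b‖ ^ k) := by ring
    _ ≤ _ := by gcongr

lemma norm_qFactor_add_one_le {j : ℝ} (hj : -1 / 2 ≤ j) {z : ℂ} (hz : z.im ≤ 1 / 2) :
    ‖qFactor j (j + 1) z‖ ≤ 1 := by
  rw [qFactor, norm_div]
  refine div_le_one_of_le₀ ?_ (norm_nonneg _)
  rw [← sq_le_sq₀ (norm_nonneg _) (norm_nonneg _), Complex.sq_norm, Complex.sq_norm,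
    normSq_apply, normSq_apply]
  simp only [sub_re, mul_re, I_re, zero_mul, I_im, one_mul, zero_sub, ofReal_re, sub_im, mul_im,
    zero_add, ofReal_im, sub_zero, ofReal_add, ofReal_one, add_re, one_re, add_im, one_im, add_zero]
  nlinarith

lemma norm_iteratedDeriv_qFactor_add_one_le {j : ℝ} (hj : 0 ≤ j) {z : ℂ} (hz : |z.im| < 1 / 2)
    {k n : ℕ} (hkn : k ≤ n) :
    ‖iteratedDeriv k (qFactor j (j + 1)) z‖ ≤ (8 * n / (1 + ‖z‖)) ^ k := by
  obtain ⟨hz₁, hz₂⟩ := abs_lt.mp hz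
  rcases Nat.eq_zero_or_pos k with rfl | hk
  · simpa using norm_qFactor_add_one_le (by linarith) hz₂.le
  have hw := I_mul_add_ne_zero (b := j + 1) (z := z) (by linarith)
  have hwpos := norm_pos_iff.mpr hw
  have hre := sub_im_le_norm_I_mul_add (j + 1) z
  have hgeom :=
    mul_one_add_norm_le_two_mul_norm_I_mul_add (b := j + 1) hz.le (by norm_num) le_rfl (by linarith)
  have hab : |j + (j + 1)| / ‖I * z + ↑(j + 1)‖ ≤ 2 := by
    rw [div_le_iff₀ hwpos, abs_of_nonneg (by linarith)]
    linarith
  have hn : (n : ℝ) / ‖I * z + ↑(j + 1)‖ ≤ 4 * n / (1 + ‖z‖) := by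
    rw [div_le_div_iff₀ hwpos (by positivity)]
    nlinarith [(Nat.cast_nonneg n : (0:ℝ) ≤ n)]
  calc ‖iteratedDeriv k (qFactor j (j + 1)) z‖
      ≤ |j + (j + 1)| / ‖I * z + ↑(j + 1)‖ * (n / ‖I * z + ↑(j + 1)‖) ^ k :=
        norm_iteratedDeriv_qFactor_le hw hk hkn
    _ ≤ 2 ^ k * (4 * n / (1 + ‖z‖)) ^ k := by
        gcongr
        exact hab.trans (le_self_pow₀ (by norm_num) hk.ne')
    _ = (8 * n / (1 + ‖z‖)) ^ k := by rw [← mul_pow]; ring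

lemma norm_iteratedDeriv_qFactor_le_of_abs_im_lt {a b ε : ℝ} (ha : 0 ≤ a) (hb : 1 / 2 ≤ b)
    (hε : 0 < ε) (hε' : ε ≤ 1 / 2) {z : ℂ} (hz : |z.im| < 1 / 2 - ε) {k n : ℕ} (hkn : k ≤ n) :
    ‖iteratedDeriv k (qFactor a b) z‖ ≤ (1 + (a + b) / ε) * (2 * n / (ε * (1 + ‖z‖))) ^ k := by
  obtain ⟨hz₁, hz₂⟩ := abs_lt.mp hz
  have hw := I_mul_add_ne_zero (b := b) (z := z) (by linarith)
  have hwpos := norm_pos_iff.mpr hw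
  have hre := sub_im_le_norm_I_mul_add b z
  have hab : (a + b) / ‖I * z + b‖ ≤ (a + b) / ε := by
    gcongr
    linarith
  rcases Nat.eq_zero_or_pos k with rfl | hk
  · have hq : qFactor a b z = 1 - (a + b : ℂ) / (I * z + b) := by
      rw [qFactor]; field_simp; ring
    rw [iteratedDeriv_zero, pow_zero, mul_one, hq]
    refine (norm_sub_le _ _).trans ?_
    rw [norm_one, norm_div, ← ofReal_add, norm_real, Real.norm_of_nonneg (by linarith)]
    linarith
  have hgeom := mul_one_add_norm_le_two_mul_norm_I_mul_add (b := b) (hz.le.trans (by linarith))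
    hε.le hε' (by linarith)
  have hn : (n : ℝ) / ‖I * z + b‖ ≤ 2 * n / (ε * (1 + ‖z‖)) := by
    rw [div_le_div_iff₀ hwpos (by positivity)]
    nlinarith [(Nat.cast_nonneg n : (0:ℝ) ≤ n)]
  calc ‖iteratedDeriv k (qFactor a b) z‖
      ≤ |a + b| / ‖I * z + b‖ * (n / ‖I * z + b‖) ^ k :=
        norm_iteratedDeriv_qFactor_le hw hk hkn
    _ ≤ (1 + (a + b) / ε) * (2 * n / (ε * (1 + ‖z‖))) ^ k := by
        rw [abs_of_nonneg (by linarith)]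
        gcongr
        linarith

lemma prod_qFactor_eq_mul_prod (j : ℕ → ℝ) (L : ℕ) (z : ℂ) :
    ∏ k ∈ range (L + 1), qFactor (j k) (j k) z =
      qFactor (j L) (j 0) z * ∏ k ∈ range L, qFactor (j k) (j (k + 1)) z := by
  simp only [qFactor, prod_div_distrib]
  rw [prod_range_succ, prod_range_succ' (fun k => I * z + j k), mul_div_mul_comm, mul_comm]

theorem norm_iteratedDeriv_prod_qFactor_le {c ε : ℝ} (hc : 1 / 2 ≤ c) (hε : 0 < ε)
    (hε' : ε ≤ 1 / 2) (L n : ℕ) {z : ℂ} (hz : |z.im| < 1 / 2 - ε) :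
    ‖iteratedDeriv n (fun w => ∏ k ∈ range (L + 1), qFactor (k + c) (k + c) w) z‖ ≤
      (1 + (L + 2 * c) / ε) * (8 * (L + 1) * n / (ε * (1 + ‖z‖))) ^ n := by
  set U := {w : ℂ | w.im < 1 / 2}
  have hU : IsOpen U := isOpen_lt continuous_im continuous_const
  have hzU : z ∈ U := (le_abs_self z.im).trans_lt (by linarith)
  have hz' : |z.im| < 1 / 2 := by linarith
  have hsplit : (fun w => ∏ k ∈ range (L + 1), qFactor (k + c) (k + c) w) =
      fun w => qFactor (L + c) c w * ∏ k ∈ range L, qFactor (k + c) (k + c + 1) w := by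
    funext w
    rw [prod_qFactor_eq_mul_prod (fun k => k + c)]
    simp only [Nat.cast_zero, zero_add, Nat.cast_succ, add_right_comm]
  have hpaired : ∀ k ≤ n,
      ‖iteratedDeriv k (fun w => ∏ i ∈ range L, qFactor (i + c) (i + c + 1) w) z‖ ≤
        (L * (8 * n / (1 + ‖z‖))) ^ k := fun k hk => by
    simpa using norm_iteratedDeriv_prod_le_of_forall_le_pow (u := range L) hU
      (fun i _ => contDiffOn_qFactor _ (by linarith [(Nat.cast_nonneg i : (0:ℝ) ≤ i)])) hzU
      fun i _ m hm =>
        norm_iteratedDeriv_qFactor_add_one_le (j := i + c) (by positivity) hz' (hm.trans hk)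
  rw [hsplit]
  refine (norm_iteratedDeriv_mul_le_of_forall_le_pow hU (contDiffOn_qFactor _ hc)
    (contDiffOn_prod fun i _ =>
      contDiffOn_qFactor _ (by linarith [(Nat.cast_nonneg i : (0:ℝ) ≤ i)])) hzU
    (fun k hk => norm_iteratedDeriv_qFactor_le_of_abs_im_lt (by positivity) hc hε hε' hz hk)
    hpaired).trans ?_
  have hn : (0 : ℝ) ≤ n := Nat.cast_nonneg n
  have hL : (0 : ℝ) ≤ L := Nat.cast_nonneg L
  rw [add_assoc (L : ℝ), ← two_mul]
  gcongr
  calc 2 * n / (ε * (1 + ‖z‖)) + L * (8 * n / (1 + ‖z‖))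
      = (2 * n + 8 * L * n * ε) / (ε * (1 + ‖z‖)) := by field_simp
    _ ≤ 8 * (L + 1) * n / (ε * (1 + ‖z‖)) := by
        gcongr
        nlinarith [mul_nonneg (mul_nonneg hL hn) (by linarith : (0 : ℝ) ≤ 1 - ε)]

theorem norm_iteratedDeriv_prod_qFactor_le_pow {c ε : ℝ} (hc : 1 / 2 ≤ c) (hc' : c ≤ 1)
    (hε : 0 < ε) (hε' : ε ≤ 1 / 2) {K α : ℕ} (hK : 1 ≤ K) (hα : α ≤ 3) {z : ℂ}
    (hz : |z.im| < 1 / 2 - ε) :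
    ‖iteratedDeriv α (fun w => ∏ k ∈ range K, qFactor (k + c) (k + c) w) z‖ ≤
      27648 / ε ^ 4 * (1 + K) ^ 4 / (1 + ‖z‖) ^ α := by
  obtain ⟨L, rfl⟩ : ∃ L, K = L + 1 := ⟨K - 1, by omega⟩
  have hα' : (α : ℝ) ≤ 3 := by exact_mod_cast hα
  have hN : 1 ≤ (L + 2 : ℝ) / ε := by rw [le_div_iff₀ hε]; linarith
  have hbase : 8 * (L + 1) * α / ε ≤ 24 * ((L + 2) / ε) := by
    rw [mul_div_assoc']
    exact div_le_div_of_nonneg_right (by nlinarith [(Nat.cast_nonneg α : (0 : ℝ) ≤ α)]) hε.le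
  have hpow : (8 * (L + 1) * α / (ε * (1 + ‖z‖))) ^ α =
      (8 * (L + 1) * α / ε) ^ α / (1 + ‖z‖) ^ α := by
    rw [← div_pow, div_div]
  calc _ ≤ (1 + (L + 2 * c) / ε) * (8 * (L + 1) * α / (ε * (1 + ‖z‖))) ^ α :=
        norm_iteratedDeriv_prod_qFactor_le hc hε hε' L α hz
    _ ≤ (2 * ((L + 2) / ε)) * ((24 * ((L + 2) / ε)) ^ 3 / (1 + ‖z‖) ^ α) := by
        rw [hpow]
        gcongr
        · linarith [div_le_div_of_nonneg_right (by linarith : (L : ℝ) + 2 * c ≤ L + 2) hε.le]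
        · calc (8 * (L + 1) * α / ε) ^ α ≤ (24 * ((L + 2) / ε)) ^ α := by
                gcongr
            _ ≤ (24 * ((L + 2) / ε)) ^ 3 := pow_le_pow_right₀ (by linarith) hα
    _ = 27648 / ε ^ 4 * (1 + ((L + 1 : ℕ) : ℝ)) ^ 4 / (1 + ‖z‖) ^ α := by
        push_cast; field_simp; ring

lemma norm_pi_cpow_neg_half_le_one : ‖(Real.pi : ℂ) ^ (-(1 / 2 : ℂ))‖ ≤ 1 := by
  rw [norm_cpow_eq_rpow_re_of_pos Real.pi_pos]
  exact Real.rpow_le_one_of_one_le_of_nonpos (by linarith [Real.pi_gt_three]) (by simp)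

lemma ite_even_prod_eq_prod_qFactor (m : ℕ) (w : ℂ) :
    (if Even m then
      ∏ k ∈ range (m / 2), (I * w - ((k : ℂ) + 1 / 2)) / (I * w + ((k : ℂ) + 1 / 2))
    else
      ∏ k ∈ range (m / 2), (I * w - ((k : ℂ) + 1)) / (I * w + ((k : ℂ) + 1))) =
      ∏ k ∈ range (m / 2),
        qFactor (k + if Even m then 1 / 2 else 1) (k + if Even m then 1 / 2 else 1) w := by
  split_ifs <;> simp [qFactor]

/-- Derivative bounds for `Q_n(λ) = π^{−1/2} ∏ (iλ − j)/(iλ + j)`, with `n = m/2 ≥ 3`,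
the product over `j = 1/2, 3/2, …, n − 1/2` when `n ∈ ℕ` and over `j = 1, …, n − 1/2`
when `n` is a half-odd-integer. -/
theorem stmt10 (ε : ℝ) (hε : 0 < ε ∧ ε < 1/2) (α : ℕ) (hα : α ≤ 3) :
    ∃ C : ℝ, 0 < C ∧ ∀ m : ℕ, 6 ≤ m → ∀ lam : ℂ, |lam.im| < 1/2 - ε →
      ‖iteratedDeriv α (fun z : ℂ =>
          (Real.pi : ℂ) ^ (-(1/2 : ℂ)) *
          (if Even m then
            ∏ k ∈ Finset.range (m/2),
              (Complex.I * z - ((k:ℂ) + 1/2)) / (Complex.I * z + ((k:ℂ) + 1/2))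
          else
            ∏ k ∈ Finset.range (m/2),
              (Complex.I * z - ((k:ℂ) + 1)) / (Complex.I * z + ((k:ℂ) + 1)))) lam‖
        ≤ C * (1 + (m:ℝ)/2) ^ 6 / (1 + ‖lam‖) ^ α := by
  obtain ⟨hε₀, hε₁⟩ := hε
  refine ⟨27648 / ε ^ 4, by positivity, fun m hm z hz => ?_⟩
  have hc : (1 / 2 : ℝ) ≤ (if Even m then 1 / 2 else 1) ∧
      (if Even m then 1 / 2 else 1 : ℝ) ≤ 1 := by
    split_ifs <;> norm_num
  have hK : 1 + ((m / 2 : ℕ) : ℝ) ≤ 1 + m / 2 := by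
    gcongr; exact Nat.cast_div_le
  simp_rw [ite_even_prod_eq_prod_qFactor m]
  rw [iteratedDeriv_const_mul_field, norm_mul]
  calc _ ≤ 1 * (27648 / ε ^ 4 * (1 + ((m / 2 : ℕ) : ℝ)) ^ 4 / (1 + ‖z‖) ^ α) :=
        mul_le_mul norm_pi_cpow_neg_half_le_one
          (norm_iteratedDeriv_prod_qFactor_le_pow hc.1 hc.2 hε₀ hε₁.le (by omega) hα hz)
          (norm_nonneg _) zero_le_one
    _ ≤ 27648 / ε ^ 4 * (1 + m / 2) ^ 6 / (1 + ‖z‖) ^ α := by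
        rw [one_mul]
        gcongr
        calc (1 + ((m / 2 : ℕ) : ℝ)) ^ 4 ≤ (1 + ((m / 2 : ℕ) : ℝ)) ^ 6 :=
              pow_le_pow_right₀ (by simp) (by norm_num)
          _ ≤ (1 + m / 2) ^ 6 := by gcongr
end

section
/- Let g(ξ) = (1/2) ∫_{−1}^{1} (1−u²)^{−1/2} F(uξ) du for ξ > 0, where F : ℝ → ℂ is C² with F(λ) = 0 for |λ| ≤ 1, |F(λ)| ≤ M(1+|λ|), |F'(λ)| ≤ M, |F''(λ)| ≤ M(1+|λ|)^{−1}. Set h(ξ) = g'(|ξ|) = (1/2)∫_{−1}^1 (1−u²)^{−1/2} u F'(u|ξ|) du. Then sup_ξ (|h(ξ)| + |ξ h'(ξ)|) ≤ C M for an absolute constant C. -/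
/-!
Write the function as `k (|ξ|)` with `k t = ½ ∫ w(u) u F'(u t) du` and `w(u) = (1 - u²)^(-1/2)`,
whose integral over `[-1, 1]` is `π` (it is the derivative of `arcsin`). Then `|k| ≤ π M / 2`
from `|F'| ≤ M`. Differentiating under the integral sign, `t k'(t) = ½ ∫ w(u) u² t F''(u t) du`,
and `|s F''(s)| ≤ M` with `|u| ≤ 1` gives `|t k'(t)| ≤ π M / 2`; so `C = π` works.
-/

open MeasureTheory Real Set Filter

theorem hasDerivAt_arcsin_eq_rpow {u : ℝ} (hu : u ∈ Ioo (-1 : ℝ) 1) :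
    HasDerivAt arcsin ((1 - u ^ 2) ^ (-(1 / 2) : ℝ)) u := by
  have h : 0 ≤ 1 - u ^ 2 := by nlinarith [hu.1, hu.2]
  rw [rpow_neg h, ← sqrt_eq_rpow, ← one_div]
  exact hasDerivAt_arcsin hu.1.ne' hu.2.ne

theorem intervalIntegrable_one_sub_sq_rpow_neg_half :
    IntervalIntegrable (fun u : ℝ => (1 - u ^ 2) ^ (-(1 / 2) : ℝ)) volume (-1) 1 := by
  refine intervalIntegral.intervalIntegrable_deriv_of_nonneg continuous_arcsin.continuousOn
    (fun u hu => hasDerivAt_arcsin_eq_rpow (by simpa using hu)) fun u hu => rpow_nonneg ?_ _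
  norm_num at hu
  nlinarith

theorem integral_one_sub_sq_rpow_neg_half :
    ∫ u in (-1 : ℝ)..1, (1 - u ^ 2) ^ (-(1 / 2) : ℝ) = π := by
  rw [intervalIntegral.integral_eq_sub_of_hasDerivAt_of_le (by norm_num)
    continuous_arcsin.continuousOn (fun u hu => hasDerivAt_arcsin_eq_rpow hu)
    intervalIntegrable_one_sub_sq_rpow_neg_half, arcsin_one, arcsin_neg_one]
  ring

section

variable {E : Type*} [NormedAddCommGroup E] [NormedSpace ℝ E]

theorem abs_mul_norm_deriv_comp_abs {k : ℝ → E} {ξ : ℝ} (hk : DifferentiableAt ℝ k |ξ|) :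
    |ξ| * ‖deriv (fun x => k |x|) ξ‖ = |ξ| * ‖deriv k |ξ|‖ := by
  rcases eq_or_ne ξ 0 with rfl | hξ
  · simp
  · rw [show (fun x => k |x|) = k ∘ (|·|) from rfl,
      (hk.hasDerivAt.scomp ξ (hasDerivAt_abs hξ)).deriv, norm_smul]
    rcases hξ.lt_or_gt with h | h <;> simp [h]

theorem hasDerivAt_intervalIntegral_smul_comp_mul [CompleteSpace E] {G : ℝ → E} {K : ℝ}
    (hG : Differentiable ℝ G) (hG' : ∀ x, ‖deriv G x‖ ≤ K) {ρ : ℝ → ℝ} {a b : ℝ}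
    (hρ : IntervalIntegrable ρ volume a b) (t : ℝ) :
    HasDerivAt (fun t => ∫ u in a..b, ρ u • G (u * t))
      (∫ u in a..b, (ρ u * u) • deriv G (u * t)) t := by
  have hρu : IntervalIntegrable (fun u => ρ u * u) volume a b :=
    hρ.mul_continuousOn continuousOn_id
  have hint : ∀ s, IntervalIntegrable (fun u => ρ u • G (u * s)) volume a b := fun s =>
    hρ.smul_continuousOn (hG.continuous.comp (continuous_mul_const s)).continuousOn
  refine (intervalIntegral.hasDerivAt_integral_of_dominated_loc_of_deriv_le
    (F' := fun s u => (ρ u * u) • deriv G (u * s)) (bound := fun u => ‖ρ u * u‖ * K) univ_mem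
    (Eventually.of_forall fun s => (hint s).def'.aestronglyMeasurable) (hint t) ?_ ?_
    (hρu.norm.mul_const K) ?_).2
  · exact hρu.def'.aestronglyMeasurable.smul
      ((stronglyMeasurable_deriv G).comp_measurable (measurable_mul_const t)).aestronglyMeasurable
  · exact ae_of_all _ fun u _ s _ => by rw [norm_smul]; gcongr; exact hG' _
  · refine ae_of_all _ fun u _ s _ => ?_
    have := ((hG (u * s)).hasDerivAt.scomp s ((hasDerivAt_id s).const_mul u)).const_smul (ρ u)
    rwa [mul_one, smul_smul] at this

theorem norm_integral_rpow_neg_half_mul_smul_le {G : ℝ → E} {M : ℝ} (hG : ∀ x, ‖G x‖ ≤ M)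
    (t : ℝ) :
    ‖∫ u in (-1 : ℝ)..1, ((1 - u ^ 2) ^ (-(1 / 2) : ℝ) * u) • G (u * t)‖ ≤ M * π := by
  rw [← integral_one_sub_sq_rpow_neg_half, ← intervalIntegral.integral_const_mul]
  refine intervalIntegral.norm_integral_le_of_norm_le (by norm_num) (ae_of_all _ fun u hu => ?_)
    (intervalIntegrable_one_sub_sq_rpow_neg_half.const_mul M)
  have hu1 : |u| ≤ 1 := abs_le.2 ⟨hu.1.le, hu.2⟩
  have hw : 0 ≤ (1 - u ^ 2) ^ (-(1 / 2) : ℝ) := rpow_nonneg (by nlinarith [hu.1, hu.2]) _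
  simp only [norm_smul, norm_mul, Real.norm_eq_abs, abs_of_nonneg hw]
  calc (1 - u ^ 2) ^ (-(1 / 2) : ℝ) * |u| * ‖G (u * t)‖
      ≤ (1 - u ^ 2) ^ (-(1 / 2) : ℝ) * 1 * M := by gcongr; exact hG _
    _ = M * (1 - u ^ 2) ^ (-(1 / 2) : ℝ) := by ring

theorem abs_mul_norm_integral_rpow_neg_half_mul_smul_le {G : ℝ → E} {M : ℝ}
    (hG : ∀ x, ‖G x‖ ≤ M / (1 + |x|)) (t : ℝ) :
    |t| * ‖∫ u in (-1 : ℝ)..1, ((1 - u ^ 2) ^ (-(1 / 2) : ℝ) * u * u) • G (u * t)‖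
      ≤ M * π := by
  have hM : 0 ≤ M := by simpa using (norm_nonneg _).trans (hG 0)
  rw [← Real.norm_eq_abs, ← norm_smul, ← intervalIntegral.integral_smul,
    ← integral_one_sub_sq_rpow_neg_half, ← intervalIntegral.integral_const_mul]
  refine intervalIntegral.norm_integral_le_of_norm_le (by norm_num) (ae_of_all _ fun u hu => ?_)
    (intervalIntegrable_one_sub_sq_rpow_neg_half.const_mul M)
  have hu1 : |u| ≤ 1 := abs_le.2 ⟨hu.1.le, hu.2⟩
  have hw : 0 ≤ (1 - u ^ 2) ^ (-(1 / 2) : ℝ) := rpow_nonneg (by nlinarith [hu.1, hu.2]) _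
  have hdecay : |u * t| * ‖G (u * t)‖ ≤ M :=
    calc |u * t| * ‖G (u * t)‖ ≤ |u * t| * (M / (1 + |u * t|)) := by gcongr; exact hG _
      _ = M * (|u * t| / (1 + |u * t|)) := by ring
      _ ≤ M := mul_le_of_le_one_right hM (div_le_one_of_le₀ (by linarith) (by positivity))
  simp only [smul_smul, norm_smul, norm_mul, Real.norm_eq_abs, abs_of_nonneg hw]
  calc |t| * ((1 - u ^ 2) ^ (-(1 / 2) : ℝ) * |u| * |u|) * ‖G (u * t)‖
      = (1 - u ^ 2) ^ (-(1 / 2) : ℝ) * |u| * (|u * t| * ‖G (u * t)‖) := by rw [abs_mul]; ring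
    _ ≤ (1 - u ^ 2) ^ (-(1 / 2) : ℝ) * 1 * M := by gcongr
    _ = M * (1 - u ^ 2) ^ (-(1 / 2) : ℝ) := by ring

end

theorem stmt16 : ∃ C : ℝ, 0 < C ∧ ∀ M : ℝ, 0 < M → ∀ F : ℝ → ℂ, ContDiff ℝ 2 F →
    (∀ lam : ℝ, |lam| ≤ 1 → F lam = 0) →
    (∀ lam : ℝ, ‖F lam‖ ≤ M * (1 + |lam|)) →
    (∀ lam : ℝ, ‖deriv F lam‖ ≤ M) →
    (∀ lam : ℝ, ‖deriv (deriv F) lam‖ ≤ M / (1 + |lam|)) →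
    ∀ ξ : ℝ,
      ‖(fun x : ℝ => (1/2 : ℂ) *
          ∫ u in (-1:ℝ)..1, (((1-u^2) ^ (-(1/2):ℝ) * u : ℝ) : ℂ) * deriv F (u * |x|)) ξ‖
        + |ξ| * ‖deriv (fun x : ℝ => (1/2 : ℂ) *
          ∫ u in (-1:ℝ)..1, (((1-u^2) ^ (-(1/2):ℝ) * u : ℝ) : ℂ) * deriv F (u * |x|)) ξ‖
      ≤ C * M := by
  refine ⟨π, pi_pos, fun M hM F hF _ _ hF1 hF2 ξ => ?_⟩
  have hF' : Differentiable ℝ (deriv F) := (hF.deriv' (n := 1)).differentiable one_ne_zero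
  have hF2' : ∀ x, ‖deriv (deriv F) x‖ ≤ M := fun x =>
    (hF2 x).trans (div_le_self hM.le (by linarith [abs_nonneg x]))
  set k : ℝ → ℂ := fun t => (1 / 2 : ℂ) *
    ∫ u in (-1 : ℝ)..1, ((1 - u ^ 2) ^ (-(1 / 2) : ℝ) * u) • deriv F (u * t)
  have hk : ∀ t, HasDerivAt k ((1 / 2 : ℂ) * ∫ u in (-1 : ℝ)..1,
      ((1 - u ^ 2) ^ (-(1 / 2) : ℝ) * u * u) • deriv (deriv F) (u * t)) t := fun t =>
    (hasDerivAt_intervalIntegral_smul_comp_mul hF' hF2'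
      (intervalIntegrable_one_sub_sq_rpow_neg_half.mul_continuousOn continuousOn_id) t).const_mul _
  simp only [← Complex.real_smul]
  change ‖k |ξ|‖ + |ξ| * ‖deriv (fun x => k |x|) ξ‖ ≤ π * M
  rw [abs_mul_norm_deriv_comp_abs (hk _).differentiableAt, (hk _).deriv, norm_mul, norm_mul,
    mul_left_comm]
  have h₀ := norm_integral_rpow_neg_half_mul_smul_le hF1 |ξ|
  have h₁ := abs_mul_norm_integral_rpow_neg_half_mul_smul_le hF2 |ξ|
  rw [abs_abs] at h₁
  have hhalf : ‖(1 / 2 : ℂ)‖ = 1 / 2 := by norm_num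
  rw [hhalf]
  linarith
end
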